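/- arXiv:2009.09451 — 2 statements merged into one kernel-verified Lean document; each statement's English description precedes it below -/
import Mathlib

section
/- Let (Ω, μ) be a probability space and u : Ω → ℝ measurable with u > 0 μ-almost everywhere, and let α > 1 be real with exp((α − 1)·u) integrable. Define g_m(x) = (1/2)·E[u·exp(−u·|x − m|)] for m ∈ {0, 1} and M(t) = E[exp(t·u)]. Then ∫_ℝ g_0(x)^α · g_1(x)^{1−α} dx ≤ ( α·M(α − 1) + (α − 1)·M(−α) ) / (2α − 1). Consequently, the R²DP Laplace mechanism applied to a query of sensitivity 1 satisfies (α, ε)-Rényi differential privacy with ε = (1/(α − 1))·ln( ( α·M(α − 1) + (α − 1)·M(−α) ) / (2α − 1) ). -/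
/-!
For a fixed scale the Rényi integral of two Laplace densities is computed in closed form by
splitting the line at `0` and `1`. The map `(c, d) ↦ c ^ α * d ^ (1 - α)` is convex and
positively homogeneous for `α > 1`, so by Jensen the Rényi integrand of the two mixtures is
bounded pointwise by the mixture of the Rényi integrands. Integrating over `x` and exchanging
the integrals (Fubini) bounds the Rényi integral of `g₀, g₁` by the expectation over `u` of the
closed form, which is `(α M(α - 1) + (α - 1) M(-α)) / (2α - 1)`.
-/

open MeasureTheory Real

open Set Function

/-- The tangent plane along the ray through `(r, 1)` of the convex function
`(c, d) ↦ c ^ a * d ^ (1 - a)` lies below it. -/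
theorem mul_rpow_sub_one_mul_sub_le_rpow_mul_rpow_one_sub {a r c d : ℝ} (ha : 1 ≤ a)
    (hr : 0 < r) (hc : 0 ≤ c) (hd : 0 < d) :
    a * r ^ (a - 1) * c - (a - 1) * r ^ a * d ≤ c ^ a * d ^ (1 - a) := by
  have hbern := one_add_mul_self_le_rpow_one_add
    (show -1 ≤ c / (r * d) - 1 by have := div_nonneg hc (mul_pos hr hd).le; linarith) ha
  rw [add_sub_cancel, div_rpow hc (mul_pos hr hd).le, mul_rpow hr.le hd.le] at hbern
  rw [rpow_sub hr, rpow_one, rpow_sub hd, rpow_one]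
  rw [le_div_iff₀ (by positivity)] at hbern
  field_simp at hbern ⊢
  linarith

theorem mul_rpow_sub_one_mul_sub_eq_rpow_mul_rpow_one_sub (a : ℝ) {c d : ℝ} (hc : 0 < c)
    (hd : 0 < d) :
    a * (c / d) ^ (a - 1) * c - (a - 1) * (c / d) ^ a * d = c ^ a * d ^ (1 - a) := by
  rw [div_rpow hc.le hd.le, div_rpow hc.le hd.le, rpow_sub hc, rpow_sub hd, rpow_one, rpow_one,
    rpow_sub hd, rpow_one]
  have := (rpow_pos_of_pos hd a).ne'
  field_simp
  ring

theorem integral_rpow_mul_integral_rpow_one_sub_le {Ω : Type*} [MeasurableSpace Ω]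
    {μ : Measure Ω} {X Y : Ω → ℝ} {a : ℝ} (ha : 1 < a) (hX : 0 ≤ᵐ[μ] X)
    (hY : ∀ᵐ ω ∂μ, 0 < Y ω) (hXY : Integrable (fun ω => X ω ^ a * Y ω ^ (1 - a)) μ) :
    (∫ ω, X ω ∂μ) ^ a * (∫ ω, Y ω ∂μ) ^ (1 - a) ≤ ∫ ω, X ω ^ a * Y ω ^ (1 - a) ∂μ := by
  have hrhs : 0 ≤ ∫ ω, X ω ^ a * Y ω ^ (1 - a) ∂μ :=
    integral_nonneg_of_ae <| by
      filter_upwards [hX, hY] with ω hx hy using mul_nonneg (rpow_nonneg hx _) (rpow_nonneg hy.le _)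
  -- if either integral vanishes, the left side is `0` since `0 ^ s = 0` for `s ≠ 0`
  rcases (integral_nonneg_of_ae hX).eq_or_lt with hX0 | hXpos
  · rwa [← hX0, zero_rpow (by linarith), zero_mul]
  rcases (integral_nonneg_of_ae (hY.mono fun _ h => h.le)).eq_or_lt with hY0 | hYpos
  · rwa [← hY0, zero_rpow (by linarith), mul_zero]
  have hXi : Integrable X μ := .of_integral_ne_zero hXpos.ne'
  have hYi : Integrable Y μ := .of_integral_ne_zero hYpos.ne'
  set r := (∫ ω, X ω ∂μ) / ∫ ω, Y ω ∂μ
  calc (∫ ω, X ω ∂μ) ^ a * (∫ ω, Y ω ∂μ) ^ (1 - a)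
      = a * r ^ (a - 1) * (∫ ω, X ω ∂μ) - (a - 1) * r ^ a * (∫ ω, Y ω ∂μ) :=
        (mul_rpow_sub_one_mul_sub_eq_rpow_mul_rpow_one_sub a hXpos hYpos).symm
    _ = ∫ ω, a * r ^ (a - 1) * X ω - (a - 1) * r ^ a * Y ω ∂μ := by
        rw [integral_sub (hXi.const_mul _) (hYi.const_mul _), integral_const_mul,
          integral_const_mul]
    _ ≤ ∫ ω, X ω ^ a * Y ω ^ (1 - a) ∂μ := by
        refine integral_mono_ae ((hXi.const_mul _).sub (hYi.const_mul _)) hXY ?_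
        filter_upwards [hX, hY] with ω hx hy
        exact mul_rpow_sub_one_mul_sub_le_rpow_mul_rpow_one_sub ha.le (div_pos hXpos hYpos) hx hy

theorem integral_mixture_rpow_mul_rpow_one_sub_le {Ω β : Type*} [MeasurableSpace Ω]
    [MeasurableSpace β] {μ : Measure Ω} {ν : Measure β} [SFinite μ] [SFinite ν]
    {p q : Ω → β → ℝ} {a : ℝ} (ha : 1 < a) (hp : ∀ᵐ ω ∂μ, ∀ x, 0 ≤ p ω x)
    (hq : ∀ᵐ ω ∂μ, ∀ x, 0 < q ω x)
    (hpq : Integrable (uncurry fun ω x => p ω x ^ a * q ω x ^ (1 - a)) (μ.prod ν)) :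
    ∫ x, (∫ ω, p ω x ∂μ) ^ a * (∫ ω, q ω x ∂μ) ^ (1 - a) ∂ν ≤
      ∫ ω, ∫ x, p ω x ^ a * q ω x ^ (1 - a) ∂ν ∂μ := by
  rw [integral_integral_swap hpq]
  refine integral_mono_of_nonneg (ae_of_all _ fun x => ?_) hpq.integral_prod_right ?_
  · exact mul_nonneg (rpow_nonneg (integral_nonneg_of_ae (hp.mono fun _ h => h x)) _)
      (rpow_nonneg (integral_nonneg_of_ae (hq.mono fun _ h => (h x).le)) _)
  · filter_upwards [hpq.prod_left_ae] with x hx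
    exact integral_rpow_mul_integral_rpow_one_sub_le ha (hp.mono fun _ h => h x)
      (hq.mono fun _ h => h x) hx

/-- Laplace density with location `m` and rate `v = 1 / b`; the compound density of the statement
is `g_m x = ∫ ω, laplacePDF (u ω) m x ∂μ`. -/
noncomputable def laplacePDF (v m x : ℝ) : ℝ := 1 / 2 * (v * exp (-v * |x - m|))

theorem laplacePDF_pos {v : ℝ} (hv : 0 < v) (m x : ℝ) : 0 < laplacePDF v m x := by
  unfold laplacePDF; positivity

theorem laplacePDF_rpow_mul_rpow {v : ℝ} (hv : 0 ≤ v) (α x : ℝ) :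
    laplacePDF v 0 x ^ α * laplacePDF v 1 x ^ (1 - α) =
      v / 2 * exp (-(v * (α * |x| + (1 - α) * |x - 1|))) := by
  have hc : 0 ≤ v / 2 := by positivity
  simp only [laplacePDF, ← mul_assoc, one_div_mul_eq_div, sub_zero]
  rw [mul_rpow hc (exp_pos _).le, mul_rpow hc (exp_pos _).le, ← exp_mul, ← exp_mul,
    mul_mul_mul_comm, ← rpow_add' hc (by norm_num), add_sub_cancel, rpow_one, ← exp_add]
  ring_nf

section LaplaceRenyi

variable {v α : ℝ}

theorem laplacePDF_rpow_mul_rpow_eqOn_Iic (hv : 0 ≤ v) :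
    EqOn (fun x => laplacePDF v 0 x ^ α * laplacePDF v 1 x ^ (1 - α))
      (fun x => v / 2 * exp ((α - 1) * v) * exp (v * x)) (Iic 0) := by
  intro x (hx : x ≤ 0)
  simp only [laplacePDF_rpow_mul_rpow hv, abs_of_nonpos hx,
    abs_of_nonpos (by linarith : x - 1 ≤ 0), mul_assoc, ← exp_add]
  ring_nf

theorem laplacePDF_rpow_mul_rpow_eqOn_Ioc (hv : 0 ≤ v) :
    EqOn (fun x => laplacePDF v 0 x ^ α * laplacePDF v 1 x ^ (1 - α))
      (fun x => v / 2 * exp ((α - 1) * v) * exp (-(v * (2 * α - 1)) * x)) (Ioc 0 1) := by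
  intro x ⟨hx0, hx1⟩
  simp only [laplacePDF_rpow_mul_rpow hv, abs_of_pos hx0,
    abs_of_nonpos (by linarith : x - 1 ≤ 0), mul_assoc, ← exp_add]
  ring_nf

theorem laplacePDF_rpow_mul_rpow_eqOn_Ioi (hv : 0 ≤ v) :
    EqOn (fun x => laplacePDF v 0 x ^ α * laplacePDF v 1 x ^ (1 - α))
      (fun x => v / 2 * exp ((1 - α) * v) * exp (-v * x)) (Ioi 1) := by
  intro x (hx : 1 < x)
  simp only [laplacePDF_rpow_mul_rpow hv, abs_of_pos (by linarith : 0 < x),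
    abs_of_pos (by linarith : 0 < x - 1), mul_assoc, ← exp_add]
  ring_nf

variable (hv : 0 < v) (hα : 1 < α)
include hv hα

theorem integrableOn_laplacePDF_rpow_mul_rpow_Ioi :
    IntegrableOn (fun x => laplacePDF v 0 x ^ α * laplacePDF v 1 x ^ (1 - α)) (Ioi 0) := by
  rw [← Ioc_union_Ioi_eq_Ioi zero_le_one]
  refine IntegrableOn.union ?_ ?_
  · refine IntegrableOn.congr_fun ?_ (laplacePDF_rpow_mul_rpow_eqOn_Ioc hv.le).symm
      measurableSet_Ioc
    exact ((integrableOn_exp_mul_Ioi (by nlinarith) 0).mono_set Ioc_subset_Ioi_self).const_mul _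
  · exact IntegrableOn.congr_fun ((integrableOn_exp_mul_Ioi (neg_lt_zero.2 hv) 1).const_mul _)
      (laplacePDF_rpow_mul_rpow_eqOn_Ioi hv.le).symm measurableSet_Ioi

theorem integrable_laplacePDF_rpow_mul_rpow :
    Integrable (fun x => laplacePDF v 0 x ^ α * laplacePDF v 1 x ^ (1 - α)) := by
  rw [← integrableOn_univ, ← Iic_union_Ioi (a := 0)]
  refine IntegrableOn.union ?_ (integrableOn_laplacePDF_rpow_mul_rpow_Ioi hv hα)
  exact IntegrableOn.congr_fun ((integrableOn_exp_mul_Iic hv 0).const_mul _)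
    (laplacePDF_rpow_mul_rpow_eqOn_Iic hv.le).symm measurableSet_Iic

theorem integral_laplacePDF_rpow_mul_rpow :
    ∫ x, laplacePDF v 0 x ^ α * laplacePDF v 1 x ^ (1 - α) =
      (α * exp ((α - 1) * v) + (α - 1) * exp (-α * v)) / (2 * α - 1) := by
  have hIoi := integrableOn_laplacePDF_rpow_mul_rpow_Ioi hv hα
  have hb : -(v * (2 * α - 1)) < 0 := by nlinarith
  rw [← intervalIntegral.integral_Iic_add_Ioi
      (integrable_laplacePDF_rpow_mul_rpow hv hα).integrableOn hIoi,
    ← intervalIntegral.integral_interval_add_Ioi hIoi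
      (hIoi.mono_set (Ioi_subset_Ioi zero_le_one)),
    intervalIntegral.integral_of_le zero_le_one,
    setIntegral_congr_fun measurableSet_Iic (laplacePDF_rpow_mul_rpow_eqOn_Iic hv.le),
    setIntegral_congr_fun measurableSet_Ioc (laplacePDF_rpow_mul_rpow_eqOn_Ioc hv.le),
    setIntegral_congr_fun measurableSet_Ioi (laplacePDF_rpow_mul_rpow_eqOn_Ioi hv.le),
    integral_const_mul, integral_const_mul, integral_const_mul,
    ← intervalIntegral.integral_of_le zero_le_one,
    ← intervalIntegral.integral_Ioi_sub_Ioi (integrableOn_exp_mul_Ioi hb 0) zero_le_one,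
    integral_exp_mul_Iic hv, integral_exp_mul_Ioi hb, integral_exp_mul_Ioi hb,
    integral_exp_mul_Ioi (neg_lt_zero.2 hv)]
  have h2α : 2 * α - 1 ≠ 0 := by linarith
  have e₁ : exp (v * (α - 1)) * exp (-(v * (2 * α - 1))) = exp (-(v * α)) := by
    rw [← exp_add]; ring_nf
  have e₂ : exp (v * (1 - α)) * exp (-v) = exp (-(v * α)) := by
    rw [← exp_add]; ring_nf
  simp only [mul_zero, exp_zero, mul_one, neg_mul]
  field_simp
  linear_combination (-1 : ℝ) * e₁ + (2 * α - 1) * e₂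

end LaplaceRenyi

theorem integrable_exp_neg_mul_of_nonneg {Ω : Type*} [MeasurableSpace Ω] {μ : Measure Ω}
    [IsFiniteMeasure μ] {X : Ω → ℝ} (hX : AEMeasurable X μ) (hX0 : 0 ≤ᵐ[μ] X) {c : ℝ}
    (hc : 0 ≤ c) : Integrable (fun ω => exp (-c * X ω)) μ := by
  refine .of_bound (by fun_prop) 1 ?_
  filter_upwards [hX0] with ω hω
  rw [norm_of_nonneg (exp_pos _).le, exp_le_one_iff, neg_mul]
  exact neg_nonpos.2 (mul_nonneg hc hω)

theorem integrable_uncurry_laplacePDF_rpow_mul_rpow {Ω : Type*} [MeasurableSpace Ω]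
    {μ : Measure Ω} [IsFiniteMeasure μ] {u : Ω → ℝ} {α : ℝ} (hu : Measurable u)
    (hupos : ∀ᵐ ω ∂μ, 0 < u ω) (hα : 1 < α)
    (hint : Integrable (fun ω => exp ((α - 1) * u ω)) μ) :
    Integrable (uncurry fun ω x => laplacePDF (u ω) 0 x ^ α * laplacePDF (u ω) 1 x ^ (1 - α))
      (μ.prod volume) := by
  have hneg := integrable_exp_neg_mul_of_nonneg hu.aemeasurable
    (hupos.mono fun _ h => h.le) (by linarith : 0 ≤ α)
  refine (integrable_prod_iff (by unfold laplacePDF; fun_prop)).2 ⟨?_, ?_⟩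
  · filter_upwards [hupos] with ω hω using integrable_laplacePDF_rpow_mul_rpow hω hα
  · refine (((hint.const_mul α).add (hneg.const_mul (α - 1))).div_const (2 * α - 1)).congr ?_
    filter_upwards [hupos] with ω hω
    simp only [Pi.add_apply, uncurry_apply_pair, ← integral_laplacePDF_rpow_mul_rpow hω hα]
    refine integral_congr_ae (ae_of_all _ fun x => (norm_of_nonneg ?_).symm)
    exact mul_nonneg (rpow_nonneg (laplacePDF_pos hω _ _).le _)
      (rpow_nonneg (laplacePDF_pos hω _ _).le _)

/-- The R²DP Laplace mechanism applied to a query of sensitivity 1 satisfies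
`(α, ε)`-Rényi differential privacy with
`ε = (1/(α-1))·ln((α·M(α-1) + (α-1)·M(-α))/(2α-1))`, where `M` is the moment
generating function of `u = 1/b`; equivalently the Rényi integral between the output
densities at locations `0` and `1` is bounded by `(α·M(α-1) + (α-1)·M(-α))/(2α-1)`. -/
theorem r2dp_renyi_dp {Ω : Type*} [MeasurableSpace Ω] (μ : Measure Ω)
    [IsProbabilityMeasure μ] (u : Ω → ℝ) (hu : Measurable u)
    (hupos : ∀ᵐ ω ∂μ, 0 < u ω) (α : ℝ) (hα : 1 < α)
    (hint : Integrable (fun ω => Real.exp ((α - 1) * u ω)) μ) :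
    (∫ x : ℝ, ((1 / 2) * ∫ ω, u ω * Real.exp (-(u ω) * |x - 0|) ∂μ) ^ α *
        ((1 / 2) * ∫ ω, u ω * Real.exp (-(u ω) * |x - 1|) ∂μ) ^ (1 - α)) ≤
      (α * (∫ ω, Real.exp ((α - 1) * u ω) ∂μ) +
          (α - 1) * (∫ ω, Real.exp (-α * u ω) ∂μ)) / (2 * α - 1) := by
  have hneg := integrable_exp_neg_mul_of_nonneg hu.aemeasurable
    (hupos.mono fun _ h => h.le) (by linarith : 0 ≤ α)
  calc _ = ∫ x, (∫ ω, laplacePDF (u ω) 0 x ∂μ) ^ α *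
          (∫ ω, laplacePDF (u ω) 1 x ∂μ) ^ (1 - α) := by
        simp only [laplacePDF, integral_const_mul]
    _ ≤ ∫ ω, (∫ x, laplacePDF (u ω) 0 x ^ α * laplacePDF (u ω) 1 x ^ (1 - α)) ∂μ :=
        integral_mixture_rpow_mul_rpow_one_sub_le hα
          (hupos.mono fun _ h x => (laplacePDF_pos h 0 x).le)
          (hupos.mono fun _ h => laplacePDF_pos h 1)
          (integrable_uncurry_laplacePDF_rpow_mul_rpow hu hupos hα hint)
    _ = ∫ ω, (α * exp ((α - 1) * u ω) + (α - 1) * exp (-α * u ω)) / (2 * α - 1) ∂μ :=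
        integral_congr_ae (hupos.mono fun ω h => integral_laplacePDF_rpow_mul_rpow h hα)
    _ = _ := by
        rw [integral_div, integral_add (hint.const_mul α) (hneg.const_mul _), integral_const_mul,
          integral_const_mul]
end

section
/- Let (Ω, μ) be a probability space and u : Ω → ℝ measurable with u > 0 μ-almost everywhere and u integrable. Define g_m(x) = (1/2)·E[u·exp(−u·|x − m|)] for m ∈ {0, 1} and M(t) = E[exp(t·u)]. Then the Kullback–Leibler divergence satisfies ∫_ℝ g_0(x)·ln( g_0(x)/g_1(x) ) dx ≤ E[u] + M(−1) − 1. That is, the R²DP Laplace mechanism applied to a query of sensitivity 1 satisfies (1, ε)-Rényi differential privacy with ε = M'(0) + M(−1) − 1, where M'(0) = E[u]. -/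
/-!
For fixed `ω` the two output densities are the Laplace densities `p_ω(x) = (u/2) e^{-u|x|}` and
`p_ω(x - 1)`, and `∫ p_ω(x) log (p_ω(x) / p_ω(x - 1)) dx = u + e^{-u} - 1`. The log-sum
inequality (joint convexity of `(a, b) ↦ a log (a / b)`) bounds the divergence integrand of the
mixtures pointwise by the mixture of these integrands; integrating in `x` and exchanging the
integrals gives `E[u + e^{-u} - 1]`.
-/

open MeasureTheory Real Set

section LaplaceKernel

variable {t : ℝ}

lemma integrable_exp_neg_mul_abs (ht : 0 < t) : Integrable fun x : ℝ => exp (-t * |x|) := by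
  rw [← integrableOn_univ, ← Iic_union_Ioi (a := (0 : ℝ))]
  refine IntegrableOn.union ?_ ?_
  · refine (integrableOn_exp_mul_Iic ht 0).congr_fun (fun x (hx : x ≤ 0) => ?_) measurableSet_Iic
    rw [abs_of_nonpos hx, mul_neg, neg_mul, neg_neg]
  · refine (integrableOn_exp_mul_Ioi (neg_lt_zero.2 ht) 0).congr_fun
      (fun x (hx : 0 < x) => ?_) measurableSet_Ioi
    rw [abs_of_pos hx]

lemma integral_exp_neg_mul_abs (ht : 0 < t) : ∫ x : ℝ, exp (-t * |x|) = 2 / t := by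
  rw [integral_comp_abs (f := fun x => exp (-t * x)), integral_exp_mul_Ioi (neg_lt_zero.2 ht)]
  simp only [mul_zero, exp_zero]
  ring

lemma abs_abs_sub_one_sub_abs_le_one (x : ℝ) : |(|x - 1| - |x|)| ≤ 1 := by
  simpa using abs_abs_sub_abs_le_abs_sub (x - 1) x

lemma integrable_sq_mul_exp_neg_mul_abs_mul_sub (ht : 0 < t) :
    Integrable fun x : ℝ => t ^ 2 * exp (-t * |x|) * (|x - 1| - |x|) :=
  ((integrable_exp_neg_mul_abs ht).const_mul _).mul_bdd (by fun_prop)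
    (ae_of_all _ abs_abs_sub_one_sub_abs_le_one)

lemma integral_sq_mul_exp_neg_mul_abs_mul_sub (ht : 0 < t) :
    ∫ x : ℝ, t ^ 2 * exp (-t * |x|) * (|x - 1| - |x|) = 2 * (t + exp (-t) - 1) := by
  set f : ℝ → ℝ := fun x => t ^ 2 * exp (-t * |x|) * (|x - 1| - |x|)
  have hf : Integrable f := integrable_sq_mul_exp_neg_mul_abs_mul_sub ht
  have left : ∫ x in Iic 0, f x = t := by
    rw [setIntegral_congr_fun measurableSet_Iic (g := fun x => t ^ 2 * exp (t * x))
      fun x (hx : x ≤ 0) => ?_, integral_const_mul, integral_exp_mul_Iic ht]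
    · field_simp
      simp only [mul_zero, exp_zero]
    · simp only [f, abs_of_nonpos hx, abs_of_nonpos (by linarith : x - 1 ≤ 0)]
      ring_nf
  have right : ∫ x in Ioi 1, f x = -(t * exp (-t)) := by
    rw [setIntegral_congr_fun measurableSet_Ioi (g := fun x => -t ^ 2 * exp (-t * x))
      fun x (hx : 1 < x) => ?_, integral_const_mul, integral_exp_mul_Ioi (neg_lt_zero.2 ht)]
    · field_simp
    · simp only [f, abs_of_pos (by linarith : 0 < x), abs_of_pos (by linarith : 0 < x - 1)]
      ring
  have middle : ∫ x in (0)..1, f x = exp (-t) * (t + 2) - (2 - t) := by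
    have antideriv (x : ℝ) : HasDerivAt (fun x => exp (-t * x) * (2 * t * x + (2 - t)))
        (t ^ 2 * exp (-t * x) * (1 - 2 * x)) x := by
      refine (((hasDerivAt_id x).const_mul (-t)).exp.mul
        (((hasDerivAt_id x).const_mul (2 * t)).add_const (2 - t))).congr_deriv ?_
      simp only [id]
      ring
    rw [intervalIntegral.integral_congr (g := fun x => t ^ 2 * exp (-t * x) * (1 - 2 * x))
      fun x hx => ?_, intervalIntegral.integral_eq_sub_of_hasDerivAt (fun x _ => antideriv x)
      ((by fun_prop : Continuous fun x => t ^ 2 * exp (-t * x) * (1 - 2 * x)).intervalIntegrable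
        0 1)]
    · simp only [mul_one, mul_zero, exp_zero]
      ring
    · rw [uIcc_of_le zero_le_one] at hx
      simp only [f, abs_of_nonneg hx.1, abs_of_nonpos (by linarith [hx.2] : x - 1 ≤ 0)]
      ring
  have split_Iic : ∫ x in Iic 1, f x = (∫ x in Iic 0, f x) + ∫ x in (0)..1, f x := by
    rw [← intervalIntegral.integral_Iic_sub_Iic hf.integrableOn hf.integrableOn]
    ring
  rw [← intervalIntegral.integral_Iic_add_Ioi hf.integrableOn hf.integrableOn, split_Iic, left,
    middle, right]
  ring

end LaplaceKernel

section LogSum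

variable {α : Type*} [MeasurableSpace α] {μ : Measure α} [NeZero μ] {f g : α → ℝ}

lemma integral_pos_of_ae_pos (hf : Integrable f μ) (hf0 : ∀ᵐ a ∂μ, 0 < f a) :
    0 < ∫ a, f a ∂μ := by
  refine (integral_pos_iff_support_of_nonneg_ae (hf0.mono fun _ h => h.le) hf).2 ?_
  refine pos_iff_ne_zero.2 fun h => ?_
  obtain ⟨a, ha, ha'⟩ := (hf0.and (measure_eq_zero_iff_ae_notMem.1 h)).exists
  exact ha' ha.ne'

lemma mul_log_integral_div_le_integral_mul_log_div (hf : Integrable f μ) (hg : Integrable g μ)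
    (hf0 : ∀ᵐ a ∂μ, 0 < f a) (hg0 : ∀ᵐ a ∂μ, 0 < g a)
    (hfg : Integrable (fun a => f a * log (f a / g a)) μ) :
    (∫ a, f a ∂μ) * log ((∫ a, f a ∂μ) / ∫ a, g a ∂μ) ≤ ∫ a, f a * log (f a / g a) ∂μ := by
  set A := ∫ a, f a ∂μ
  set B := ∫ a, g a ∂μ
  have hA : 0 < A := integral_pos_of_ae_pos hf hf0
  have hB : 0 < B := integral_pos_of_ae_pos hg hg0
  have pointwise : ∀ᵐ a ∂μ, f a * log (A / B) ≤ f a * log (f a / g a) - f a + A / B * g a := by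
    filter_upwards [hf0, hg0] with a hfa hga
    calc f a * log (A / B) = f a * log (f a / g a) + f a * log (A / B * g a / f a) := by
          rw [log_div (by positivity) hfa.ne', log_mul (by positivity) hga.ne',
            log_div hfa.ne' hga.ne']
          ring
      _ ≤ f a * log (f a / g a) + f a * (A / B * g a / f a - 1) := by
          gcongr
          exact log_le_sub_one_of_pos (by positivity)
      _ = f a * log (f a / g a) - f a + A / B * g a := by
          field_simp
          ring
  calc A * log (A / B) = ∫ a, f a * log (A / B) ∂μ := (integral_mul_const _ _).symm
    _ ≤ ∫ a, f a * log (f a / g a) - f a + A / B * g a ∂μ :=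
        integral_mono_ae (hf.mul_const _) ((hfg.sub hf).add (hg.const_mul _)) pointwise
    _ = ∫ a, f a * log (f a / g a) ∂μ := by
        rw [integral_add (f := fun a => f a * log (f a / g a) - f a) (hfg.sub hf) (hg.const_mul _),
          integral_sub hfg hf, integral_const_mul,
          div_mul_cancel₀ _ hB.ne']
        ring

end LogSum

lemma integral_le_of_ae_le_of_integral_nonneg {α : Type*} [MeasurableSpace α] {μ : Measure α}
    {f g : α → ℝ} (hle : f ≤ᵐ[μ] g) (hg : Integrable g μ) (hg0 : 0 ≤ ∫ a, g a ∂μ) :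
    ∫ a, f a ∂μ ≤ ∫ a, g a ∂μ := by
  -- a non-integrable `f` has `∫ f = 0`
  by_cases hf : Integrable f μ
  · exact integral_mono_ae hf hg hle
  · rwa [integral_undef hf]

section LaplaceMixture

variable {Ω : Type*} [MeasurableSpace Ω] {μ : Measure Ω} {u : Ω → ℝ} {c : ℝ}

lemma integrable_mul_exp_neg_mul (huint : Integrable u μ) (hu0 : ∀ᵐ ω ∂μ, 0 ≤ u ω) (hc : 0 ≤ c) :
    Integrable (fun ω => u ω * exp (-u ω * c)) μ := by
  have := huint.aestronglyMeasurable
  refine huint.mul_bdd (c := 1) (by fun_prop) ?_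
  filter_upwards [hu0] with ω hω
  rw [norm_of_nonneg (exp_pos _).le, exp_le_one_iff]
  nlinarith

lemma integrable_sq_mul_exp_neg_mul (huint : Integrable u μ) (hu0 : ∀ᵐ ω ∂μ, 0 ≤ u ω)
    (hc : 0 < c) : Integrable (fun ω => u ω ^ 2 * exp (-u ω * c)) μ := by
  have := huint.aestronglyMeasurable
  refine (huint.const_mul c⁻¹).mono' (by fun_prop) ?_
  filter_upwards [hu0] with ω hω
  have hdecay : u ω * c * exp (-(u ω * c)) ≤ 1 :=
    (mul_exp_neg_le_exp_neg_one _).trans (exp_le_one_iff.2 (by norm_num))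
  rw [norm_of_nonneg (by positivity), ← mul_le_mul_iff_of_pos_left hc, neg_mul]
  calc c * (u ω ^ 2 * exp (-(u ω * c))) = u ω * (u ω * c * exp (-(u ω * c))) := by ring
    _ ≤ u ω * 1 := by gcongr
    _ = c * (c⁻¹ * u ω) := by field_simp

lemma mul_log_integral_laplace_div_le [NeZero μ] (huint : Integrable u μ)
    (hupos : ∀ᵐ ω ∂μ, 0 < u ω) {x : ℝ} (hx : x ≠ 0) :
    (∫ ω, u ω * exp (-u ω * |x|) ∂μ) *
        log ((∫ ω, u ω * exp (-u ω * |x|) ∂μ) / ∫ ω, u ω * exp (-u ω * |x - 1|) ∂μ) ≤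
      ∫ ω, u ω ^ 2 * exp (-u ω * |x|) * (|x - 1| - |x|) ∂μ := by
  have hu0 : ∀ᵐ ω ∂μ, 0 ≤ u ω := hupos.mono fun _ h => h.le
  have log_ratio : ∀ᵐ ω ∂μ, u ω * exp (-u ω * |x|) *
      log (u ω * exp (-u ω * |x|) / (u ω * exp (-u ω * |x - 1|))) =
        u ω ^ 2 * exp (-u ω * |x|) * (|x - 1| - |x|) := by
    filter_upwards [hupos] with ω hω
    rw [mul_div_mul_left _ _ hω.ne', ← exp_sub, log_exp]
    ring
  have hkl : Integrable (fun ω => u ω ^ 2 * exp (-u ω * |x|) * (|x - 1| - |x|)) μ :=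
    (integrable_sq_mul_exp_neg_mul huint hu0 (abs_pos.2 hx)).mul_const _
  rw [← integral_congr_ae log_ratio]
  exact mul_log_integral_div_le_integral_mul_log_div
    (integrable_mul_exp_neg_mul huint hu0 (abs_nonneg _))
    (integrable_mul_exp_neg_mul huint hu0 (abs_nonneg _))
    (hupos.mono fun _ h => mul_pos h (exp_pos _)) (hupos.mono fun _ h => mul_pos h (exp_pos _))
    (hkl.congr (log_ratio.mono fun _ h => h.symm))

lemma integrable_prod_sq_mul_exp_neg_mul_abs_mul_sub [SFinite μ] (huint : Integrable u μ)
    (hupos : ∀ᵐ ω ∂μ, 0 < u ω) :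
    Integrable (Function.uncurry fun ω (x : ℝ) => u ω ^ 2 * exp (-u ω * |x|) * (|x - 1| - |x|))
      (μ.prod volume) := by
  have hmeas : AEStronglyMeasurable (Function.uncurry fun ω (x : ℝ) =>
      u ω ^ 2 * exp (-u ω * |x|) * (|x - 1| - |x|)) (μ.prod volume) := by
    have hu := huint.aestronglyMeasurable.comp_fst (ν := (volume : Measure ℝ))
    have habs : Measurable fun z : Ω × ℝ => |z.2| := by fun_prop
    have hdiff : Measurable fun z : Ω × ℝ => |z.2 - 1| - |z.2| := by fun_prop
    exact ((hu.pow 2).mul (continuous_exp.comp_aestronglyMeasurable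
      (hu.neg.mul habs.aestronglyMeasurable))).mul hdiff.aestronglyMeasurable
  refine (integrable_prod_iff hmeas).2 ⟨hupos.mono fun _ h =>
    integrable_sq_mul_exp_neg_mul_abs_mul_sub h, ?_⟩
  refine (huint.const_mul 2).mono' hmeas.norm.integral_prod_right' ?_
  filter_upwards [hupos] with ω hω
  rw [norm_of_nonneg (integral_nonneg fun _ => norm_nonneg _)]
  calc ∫ x, ‖u ω ^ 2 * exp (-u ω * |x|) * (|x - 1| - |x|)‖
      ≤ ∫ x, u ω ^ 2 * exp (-u ω * |x|) := by
        refine integral_mono (integrable_sq_mul_exp_neg_mul_abs_mul_sub hω).norm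
          ((integrable_exp_neg_mul_abs hω).const_mul _) fun x => ?_
        rw [norm_mul, norm_of_nonneg (by positivity)]
        exact mul_le_of_le_one_right (by positivity) (abs_abs_sub_one_sub_abs_le_one x)
    _ = 2 * u ω := by
        rw [integral_const_mul, integral_exp_neg_mul_abs hω]
        field_simp

lemma integral_integral_sq_mul_exp_neg_mul_abs_mul_sub [SFinite μ] (huint : Integrable u μ)
    (hupos : ∀ᵐ ω ∂μ, 0 < u ω) :
    ∫ x, ∫ ω, u ω ^ 2 * exp (-u ω * |x|) * (|x - 1| - |x|) ∂μ =
      2 * ∫ ω, (u ω + exp (-u ω) - 1) ∂μ := by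
  rw [← integral_integral_swap (integrable_prod_sq_mul_exp_neg_mul_abs_mul_sub huint hupos),
    ← integral_const_mul]
  exact integral_congr_ae (hupos.mono fun _ h => integral_sq_mul_exp_neg_mul_abs_mul_sub h)

end LaplaceMixture

theorem r2dp_kl_dp_general {Ω : Type*} [MeasurableSpace Ω] (μ : Measure Ω)
    [IsProbabilityMeasure μ] (u : Ω → ℝ)
    (hupos : ∀ᵐ ω ∂μ, 0 < u ω) (huint : Integrable u μ) :
    (∫ x : ℝ, ((1 / 2) * ∫ ω, u ω * Real.exp (-(u ω) * |x - 0|) ∂μ) *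
        Real.log (((1 / 2) * ∫ ω, u ω * Real.exp (-(u ω) * |x - 0|) ∂μ) /
          ((1 / 2) * ∫ ω, u ω * Real.exp (-(u ω) * |x - 1|) ∂μ))) ≤
      (∫ ω, u ω ∂μ) + (∫ ω, Real.exp (-u ω) ∂μ) - 1 := by
  have hexp : Integrable (fun ω => exp (-u ω)) μ := by
    simpa using ProbabilityTheory.integrable_exp_mul_of_le 1 0 zero_le_one
      huint.aemeasurable.neg (hupos.mono fun _ h => neg_nonpos.2 h.le)
  have hmean : (∫ ω, u ω ∂μ) + (∫ ω, exp (-u ω) ∂μ) - 1 = ∫ ω, (u ω + exp (-u ω) - 1) ∂μ := by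
    rw [integral_sub (f := fun ω => u ω + exp (-u ω)) (huint.add hexp) (integrable_const 1),
      integral_add huint hexp]
    simp
  have hmean_nonneg : 0 ≤ ∫ ω, (u ω + exp (-u ω) - 1) ∂μ :=
    integral_nonneg fun ω => sub_nonneg.2 (by linarith [add_one_le_exp (-u ω)])
  have hdouble := integral_integral_sq_mul_exp_neg_mul_abs_mul_sub huint hupos
  have hkl := integral_le_of_ae_le_of_integral_nonneg
    ((Measure.ae_ne volume 0).mono fun x hx => mul_log_integral_laplace_div_le huint hupos hx)
    (integrable_prod_sq_mul_exp_neg_mul_abs_mul_sub huint hupos).integral_prod_right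
    (by rw [hdouble]; positivity)
  simp only [sub_zero, mul_div_mul_left _ _ (one_half_pos.ne' : (1 / 2 : ℝ) ≠ 0), mul_assoc,
    integral_const_mul]
  linarith

/-- The R²DP Laplace mechanism applied to a query of sensitivity 1 satisfies
`(1, ε)`-Rényi differential privacy with `ε = M'(0) + M(-1) - 1 = E[u] + E[exp(-u)] - 1`:
the Kullback–Leibler divergence between the output densities at locations `0` and `1`
is bounded by `E[u] + M(-1) - 1`. -/
theorem r2dp_kl_dp {Ω : Type*} [MeasurableSpace Ω] (μ : Measure Ω)
    [IsProbabilityMeasure μ] (u : Ω → ℝ) (hu : Measurable u)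
    (hupos : ∀ᵐ ω ∂μ, 0 < u ω) (huint : Integrable u μ) :
    (∫ x : ℝ, ((1 / 2) * ∫ ω, u ω * Real.exp (-(u ω) * |x - 0|) ∂μ) *
        Real.log (((1 / 2) * ∫ ω, u ω * Real.exp (-(u ω) * |x - 0|) ∂μ) /
          ((1 / 2) * ∫ ω, u ω * Real.exp (-(u ω) * |x - 1|) ∂μ))) ≤
      (∫ ω, u ω ∂μ) + (∫ ω, Real.exp (-u ω) ∂μ) - 1 :=
  r2dp_kl_dp_general μ u hupos huint
end
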